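/- arXiv:1903.04450 — 9 statements merged into one kernel-verified Lean document; each statement's English description precedes it below -/
import Mathlib

section
/- Let m ≥ 1 and r be integers with gcd(m, r) = 1. Then gcd(2^m + 1, 2^r + 1) is equal to either 1 or 3. -/
/-!
Modulo `d = gcd(2^m + 1, 2^r + 1)` we have `2^m = 2^r = -1`, so `2^(2m) = 2^(2r) = 1` and hence
`2^2 = 2^gcd(2m, 2r) = 1`. One of the coprime exponents is odd, so `2 = 2^m = -1` or `2 = 2^r = -1`
modulo `d`, i.e. `d ∣ 3`.
-/

theorem Nat.Coprime.odd_or_odd {m r : ℕ} (h : m.Coprime r) : Odd m ∨ Odd r := by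
  by_contra! heven
  simp only [Nat.not_odd_iff_even] at heven
  have : 2 ∣ m.gcd r := Nat.dvd_gcd heven.1.two_dvd heven.2.two_dvd
  rw [h] at this
  omega

theorem pow_eq_self_of_sq_eq_one_of_odd {M : Type*} [Monoid M] {x : M} (hx : x ^ 2 = 1)
    {n : ℕ} (hn : Odd n) : x ^ n = x := by
  obtain ⟨k, rfl⟩ := hn
  rw [pow_succ, pow_mul, hx, one_pow, one_mul]

theorem eq_neg_one_of_pow_eq_neg_one_of_coprime {M : Type*} [Monoid M] [HasDistribNeg M] {x : M}
    {m r : ℕ} (hmr : m.Coprime r) (hm : x ^ m = -1) (hr : x ^ r = -1) : x = -1 := by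
  have hsq : x ^ 2 = 1 := by
    have h2m : x ^ (2 * m) = 1 := by rw [pow_mul', hm, neg_one_sq]
    have h2r : x ^ (2 * r) = 1 := by rw [pow_mul', hr, neg_one_sq]
    simpa [Nat.gcd_mul_left, hmr] using pow_gcd_eq_one.2 ⟨h2m, h2r⟩
  rcases hmr.odd_or_odd with hodd | hodd
  · rwa [pow_eq_self_of_sq_eq_one_of_odd hsq hodd] at hm
  · rwa [pow_eq_self_of_sq_eq_one_of_odd hsq hodd] at hr

theorem Nat.gcd_pow_add_one_dvd_add_one (a : ℕ) {m r : ℕ} (hmr : m.Coprime r) :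
    Nat.gcd (a ^ m + 1) (a ^ r + 1) ∣ a + 1 := by
  set d := Nat.gcd (a ^ m + 1) (a ^ r + 1)
  have pow_eq_neg_one {n : ℕ} (hn : d ∣ a ^ n + 1) : (a : ZMod d) ^ n = -1 := by
    have := (ZMod.natCast_eq_zero_iff _ _).2 hn
    push_cast at this
    exact eq_neg_of_add_eq_zero_left this
  have ha : (a : ZMod d) = -1 := eq_neg_one_of_pow_eq_neg_one_of_coprime hmr
    (pow_eq_neg_one (Nat.gcd_dvd_left _ _)) (pow_eq_neg_one (Nat.gcd_dvd_right _ _))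
  rw [← ZMod.natCast_eq_zero_iff]
  push_cast
  rw [ha, neg_add_cancel]

theorem gcd_two_pow_add_one_eq_one_or_three_general (m r : ℕ)
    (h : Nat.gcd m r = 1) :
    Nat.gcd (2 ^ m + 1) (2 ^ r + 1) = 1 ∨ Nat.gcd (2 ^ m + 1) (2 ^ r + 1) = 3 :=
  Nat.prime_three.eq_one_or_self_of_dvd _ (Nat.gcd_pow_add_one_dvd_add_one 2 h)

theorem gcd_two_pow_add_one_eq_one_or_three (m r : ℕ) (hm : 1 ≤ m)
    (h : Nat.gcd m r = 1) :
    Nat.gcd (2 ^ m + 1) (2 ^ r + 1) = 1 ∨ Nat.gcd (2 ^ m + 1) (2 ^ r + 1) = 3 :=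
  gcd_two_pow_add_one_eq_one_or_three_general m r h
end

section
/- Let m ≥ 1 and r ≥ 1 be integers with gcd(m, r) = 1. Then gcd(2^m + 1, 2^r + 1) = 3 if and only if both m and r are odd. -/
/-! Since `2 ^ k + 1 ∣ 2 ^ (2k) - 1`, the gcd divides
`gcd (2 ^ (2m) - 1) (2 ^ (2r) - 1) = 2 ^ (2 gcd m r) - 1 = 3`; so it is `3` exactly when `3` divides
both `2 ^ m + 1` and `2 ^ r + 1`, i.e. when `m` and `r` are odd. -/

lemma three_dvd_two_pow_add_one_iff (k : ℕ) : 3 ∣ 2 ^ k + 1 ↔ Odd k := by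
  refine ⟨fun hdvd => ?_, fun hk => by simpa using hk.nat_add_dvd_pow_add_pow 2 1⟩
  rcases Nat.even_or_odd k with ⟨j, rfl⟩ | hk
  · -- `2 ^ (2 * j) + 1 = 4 ^ j + 1 ≡ 2 [MOD 3]`
    rw [← two_mul, pow_mul, Nat.dvd_iff_mod_eq_zero, Nat.add_mod, Nat.pow_mod] at hdvd
    simp at hdvd
  · exact hk

lemma pow_add_one_dvd_pow_two_mul_sub_one (a k : ℕ) : a ^ k + 1 ∣ a ^ (2 * k) - 1 :=
  ⟨a ^ k - 1, by rw [mul_comm, pow_mul, ← Nat.sq_sub_sq, one_pow]⟩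

lemma gcd_pow_add_one_dvd_pow_two_mul_gcd_sub_one (a m n : ℕ) :
    Nat.gcd (a ^ m + 1) (a ^ n + 1) ∣ a ^ (2 * Nat.gcd m n) - 1 := by
  rw [← Nat.gcd_mul_left, ← Nat.pow_sub_one_gcd_pow_sub_one]
  exact Nat.dvd_gcd ((Nat.gcd_dvd_left _ _).trans (pow_add_one_dvd_pow_two_mul_sub_one a m))
    ((Nat.gcd_dvd_right _ _).trans (pow_add_one_dvd_pow_two_mul_sub_one a n))

theorem gcd_two_pow_add_one_eq_three_iff_general (m r : ℕ)
    (h : Nat.gcd m r = 1) :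
    Nat.gcd (2 ^ m + 1) (2 ^ r + 1) = 3 ↔ Odd m ∧ Odd r := by
  have hdvd : Nat.gcd (2 ^ m + 1) (2 ^ r + 1) ∣ 3 := by
    simpa [h] using gcd_pow_add_one_dvd_pow_two_mul_gcd_sub_one 2 m r
  rw [← three_dvd_two_pow_add_one_iff, ← three_dvd_two_pow_add_one_iff, ← Nat.dvd_gcd_iff]
  exact ⟨fun heq => heq ▸ dvd_rfl, Nat.dvd_antisymm hdvd⟩

theorem gcd_two_pow_add_one_eq_three_iff (m r : ℕ) (hm : 1 ≤ m) (hr : 1 ≤ r)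
    (h : Nat.gcd m r = 1) :
    Nat.gcd (2 ^ m + 1) (2 ^ r + 1) = 3 ↔ Odd m ∧ Odd r :=
  gcd_two_pow_add_one_eq_three_iff_general m r h
end

section
/- Let q = 2^m, K = F_{q^2}, conjugation x̄ = x^q, S = {u ∈ K : u·ū = 1}, and 1 < r < m - 1 with gcd(m, r) = 1. The equation u·u^{2^{m-r}} + ū·ū^{2^{m-r}} = 0 has a solution u ∈ S with u ≠ 1 if and only if m is odd and r is even. -/
private lemma pow2_mod3 (n : ℕ) : 2 ^ n % 3 = if n % 2 = 0 then 1 else 2 := by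
  induction n with
  | zero => rfl
  | succ k ih =>
    rw [pow_succ, Nat.mul_mod, ih]
    split_ifs <;> omega

private lemma three_dvd_iff (n : ℕ) : 3 ∣ 2 ^ n + 1 ↔ n % 2 = 1 := by
  have h := pow2_mod3 n
  split_ifs at h <;> omega

theorem solution_iff_m_odd_r_even (m r : ℕ) (hr : 1 < r) (hrm : r + 1 < m)
    (hgcd : Nat.gcd m r = 1)
    (K : Type*) [Field K] [Fintype K] (hK : Fintype.card K = 2 ^ (2 * m)) :
    (∃ u : K, u ^ (2 ^ m + 1) = 1 ∧ u ≠ 1 ∧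
      u * u ^ (2 ^ (m - r)) + u ^ (2 ^ m) * (u ^ (2 ^ m)) ^ (2 ^ (m - r)) = 0) ↔
    Odd m ∧ Even r := by
  classical
  -- characteristic 2
  obtain ⟨p, hp⟩ := CharP.exists K
  obtain ⟨n, hpp, hcard⟩ := @FiniteField.card K _ _ p hp
  have hp2 : p = 2 := by
    have h1 : p ∣ 2 ^ (2 * m) := by
      rw [← hK, hcard]; exact dvd_pow_self p n.pos.ne'
    exact (Nat.prime_dvd_prime_iff_eq hpp Nat.prime_two).mp (hpp.dvd_of_dvd_pow h1)
  subst hp2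
  haveI : CharP K 2 := hp
  have h2K : (2 : K) = 0 := CharTwo.two_eq_zero
  obtain ⟨s, hs⟩ : ∃ s, s = m - r := ⟨_, rfl⟩
  rw [show m - r = s from hs.symm]
  have hsgcd : Nat.gcd m s = 1 := by
    have h1 : Nat.gcd (m - r) r = Nat.gcd m r := Nat.gcd_sub_self_left (by omega)
    calc Nat.gcd m s = Nat.gcd s m := Nat.gcd_comm _ _
      _ = Nat.gcd s (s + r) := by rw [hs]; congr 1; omega
      _ = Nat.gcd s r := Nat.gcd_self_add_right _ _
      _ = 1 := by rw [hs, h1, hgcd]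
  constructor
  · rintro ⟨u, hu1, hune, heq⟩
    obtain ⟨v, hv⟩ : ∃ v, v = u ^ (2 ^ s + 1) := ⟨_, rfl⟩
    have hv1 : v ^ (2 ^ m + 1) = 1 := by
      rw [hv, ← pow_mul, mul_comm, pow_mul, hu1, one_pow]
    have e1 : u * u ^ 2 ^ s = v := by rw [hv, pow_succ, mul_comm]
    have e2 : u ^ 2 ^ m * (u ^ 2 ^ m) ^ 2 ^ s = v ^ 2 ^ m := by
      rw [hv, ← pow_mul, ← pow_mul, ← pow_add]
      congr 1
      ring
    rw [e1, e2] at heq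
    have hqv : v ^ 2 ^ m = v := by linear_combination heq - v * h2K
    have hv2 : v * v = 1 := by
      conv_rhs => rw [← hv1]
      rw [pow_succ, hqv]
    have hvone : v = 1 := by
      have h0 : (v + 1) ^ 2 = 0 := by
        rw [CharTwo.add_sq]; linear_combination hv2 + h2K
      have h1 := pow_eq_zero_iff (n := 2) (by norm_num) |>.mp h0
      linear_combination h1 - h2K
    -- order argument
    have hd1 : orderOf u ∣ 2 ^ m + 1 := orderOf_dvd_of_pow_eq_one hu1
    have hd2 : orderOf u ∣ 2 ^ s + 1 := orderOf_dvd_of_pow_eq_one (hv ▸ hvone)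
    have hdne : orderOf u ≠ 1 := fun h => hune (orderOf_eq_one_iff.mp h)
    obtain ⟨q, hq', hqd⟩ := Nat.exists_prime_and_dvd hdne
    have hqm : q ∣ 2 ^ m + 1 := hqd.trans hd1
    have hqs : q ∣ 2 ^ s + 1 := hqd.trans hd2
    haveI : Fact q.Prime := ⟨hq'⟩
    have hm1 : (2 : ZMod q) ^ m = -1 := by
      have h := (ZMod.natCast_eq_zero_iff (2 ^ m + 1) q).mpr hqm
      push_cast at h
      linear_combination h
    have hs1 : (2 : ZMod q) ^ s = -1 := by
      have h := (ZMod.natCast_eq_zero_iff (2 ^ s + 1) q).mpr hqs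
      push_cast at h
      linear_combination h
    have h2m : (2 : ZMod q) ^ (2 * m) = 1 := by
      rw [two_mul, pow_add, hm1]; norm_num
    have h2s : (2 : ZMod q) ^ (2 * s) = 1 := by
      rw [two_mul, pow_add, hs1]; norm_num
    have ho : orderOf (2 : ZMod q) ∣ 2 := by
      have h := Nat.dvd_gcd (orderOf_dvd_of_pow_eq_one h2m) (orderOf_dvd_of_pow_eq_one h2s)
      rwa [Nat.gcd_mul_left, hsgcd, mul_one] at h
    have h4 : (2 : ZMod q) ^ 2 = 1 := orderOf_dvd_iff_pow_eq_one.mp ho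
    have hq3 : q = 3 := by
      have h3 : ((3 : ℕ) : ZMod q) = 0 := by push_cast; linear_combination h4
      exact (Nat.prime_dvd_prime_iff_eq hq' (by norm_num)).mp
        ((ZMod.natCast_eq_zero_iff 3 q).mp h3)
    subst hq3
    have hmo : m % 2 = 1 := (three_dvd_iff m).mp hqm
    have hso : s % 2 = 1 := (three_dvd_iff s).mp hqs
    exact ⟨Nat.odd_iff.mpr hmo, Nat.even_iff.mpr (by omega)⟩
  · rintro ⟨hm, hrr⟩
    have hmo : m % 2 = 1 := Nat.odd_iff.mp hm
    have hro : r % 2 = 0 := Nat.even_iff.mp hrr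
    have hso : s % 2 = 1 := by omega
    have h3m : 3 ∣ 2 ^ m + 1 := (three_dvd_iff m).mpr hmo
    have h3s : 3 ∣ 2 ^ s + 1 := (three_dvd_iff s).mpr hso
    have hdvd : 3 ∣ Fintype.card Kˣ := by
      rw [Fintype.card_units, hK]
      have h := pow2_mod3 (2 * m)
      simp [Nat.mul_mod_right] at h
      omega
    haveI : Fact (Nat.Prime 3) := ⟨by norm_num⟩
    obtain ⟨u, hu3⟩ := exists_prime_orderOf_dvd_card (G := Kˣ) 3 hdvd
    have hu3' : (u : K) ^ 3 = 1 := by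
      have h := pow_orderOf_eq_one u
      rw [hu3] at h
      calc (u : K) ^ 3 = ((u ^ 3 : Kˣ) : K) := (Units.val_pow_eq_pow_val u 3).symm
        _ = 1 := by rw [h, Units.val_one]
    have hune : (u : K) ≠ 1 := by
      intro h
      have h1 : u = 1 := Units.ext h
      rw [h1] at hu3; simp at hu3
    obtain ⟨a, ha⟩ := h3m
    obtain ⟨b, hb⟩ := h3s
    refine ⟨u, ?_, hune, ?_⟩
    · rw [ha, pow_mul, hu3', one_pow]
    · have key : (u : K) ^ (2 ^ s + 1) = 1 := by rw [hb, pow_mul, hu3', one_pow]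
      have e1 : (u : K) * (u : K) ^ 2 ^ s = 1 := by
        rw [← key, pow_succ, mul_comm]
      have e2 : (u : K) ^ 2 ^ m * ((u : K) ^ 2 ^ m) ^ 2 ^ s = 1 := by
        have h : (u : K) ^ 2 ^ m * ((u : K) ^ 2 ^ m) ^ 2 ^ s
            = ((u : K) ^ (2 ^ s + 1)) ^ 2 ^ m := by
          rw [← pow_mul, ← pow_mul, ← pow_add]
          congr 1
          ring
        rw [h, key, one_pow]
      rw [e1, e2]
      linear_combination h2K
end

section
/- Let q = 2^m, K = F_{q^2}, conjugation x̄ = x^q, S = {u ∈ K : u·ū = 1}, and 1 < r < m - 1 with gcd(m, r) = 1. The equation ū·u^{2^{m-r}} + u·ū^{2^{m-r}} = 0 has a solution u ∈ S with u ≠ 1 if and only if both m and r are odd. -/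
/-!
Since `ū = u⁻¹` on `S`, the equation says `u^(s-1) = u^(1-s)` with `s = 2^(m-r)`, so
`(u^(s-1))² = 1`, hence `u^(s-1) = 1` in characteristic 2. If `m` and `r` are not both odd,
then `m - r` is odd and coprime to `m`, so `2^(m-r) - 1` is coprime to `2^m + 1` and `u = 1`.
If both are odd, a primitive cube root of unity works: `2^m ≡ 2`, `2^(m-r) ≡ 1 (mod 3)`.
-/

theorem Nat.odd_sub_of_coprime {m r : ℕ} (hmr : Nat.Coprime m r) (hrm : r ≤ m)
    (hodd : ¬(Odd m ∧ Odd r)) : Odd (m - r) := by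
  rcases Nat.even_or_odd m with hm | hm <;> rcases Nat.even_or_odd r with hr | hr
  · exact absurd (Nat.dvd_gcd hm.two_dvd hr.two_dvd) (by rw [hmr]; decide)
  · exact Nat.Even.sub_odd hrm hm hr
  · exact Nat.Odd.sub_even hrm hm hr
  · exact absurd ⟨hm, hr⟩ hodd

theorem Nat.coprime_two_pow_sub_one_two_pow_add_one {a b : ℕ} (ha : Odd a)
    (hab : Nat.Coprime a b) : Nat.Coprime (2 ^ a - 1) (2 ^ b + 1) := by
  have h2b : Nat.Coprime a (2 * b) := Nat.Coprime.mul_right (Nat.coprime_two_right.mpr ha) hab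
  have hcop : Nat.Coprime (2 ^ a - 1) (2 ^ (2 * b) - 1) := by
    rw [Nat.Coprime, Nat.pow_sub_one_gcd_pow_sub_one, h2b, pow_one]
  refine hcop.coprime_dvd_right ⟨2 ^ b - 1, ?_⟩
  rw [pow_mul', ← Nat.sq_sub_sq, one_pow]

theorem Nat.three_dvd_two_pow_add_one {n : ℕ} (hn : Odd n) : 3 ∣ 2 ^ n + 1 := by
  simpa using hn.nat_add_dvd_pow_add_pow 2 1

theorem exists_orderOf_eq_prime_of_dvd_card_sub_one {K : Type*} [Field K] [Fintype K]
    {p : ℕ} [Fact p.Prime] (hp : p ∣ Fintype.card K - 1) : ∃ ζ : K, orderOf ζ = p := by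
  classical
  obtain ⟨ζ, hζ⟩ := exists_prime_orderOf_dvd_card (G := Kˣ) p (by rwa [Fintype.card_units])
  exact ⟨(ζ : K), orderOf_units.trans hζ⟩

theorem pow_sub_one_eq_one_of_add_eq_zero {K : Type*} [Field K] [CharP K 2] {u : K} {q s : ℕ}
    (hs : s ≠ 0) (hu : u ^ (q + 1) = 1) (h : u ^ q * u ^ s + u * (u ^ q) ^ s = 0) :
    u ^ (s - 1) = 1 := by
  have hu0 : u ≠ 0 := by rintro rfl; simp at hu
  obtain ⟨t, rfl⟩ := Nat.exists_eq_add_one_of_ne_zero hs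
  rw [CharTwo.add_eq_zero] at h
  have key : u ^ 2 * (u ^ t) ^ 2 = u ^ 2 * 1 ^ 2 := by
    calc u ^ 2 * (u ^ t) ^ 2 = u ^ (q + 1) * u ^ 2 * (u ^ t) ^ 2 := by rw [hu, one_mul]
      _ = u ^ q * u ^ (t + 1) * u ^ (t + 1) * u := by ring
      _ = u * (u ^ q) ^ (t + 1) * u ^ (t + 1) * u := by rw [h]
      _ = u ^ 2 * (u ^ (q + 1)) ^ (t + 1) := by ring
      _ = u ^ 2 * 1 ^ 2 := by rw [hu, one_pow, one_pow]
  exact CharTwo.sq_injective (mul_left_cancel₀ (pow_ne_zero 2 hu0) key)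

theorem solution_iff_m_odd_r_odd_general (m r : ℕ) (hrm : r + 1 < m)
    (hgcd : Nat.gcd m r = 1)
    (K : Type*) [Field K] [Fintype K] (hK : Fintype.card K = 2 ^ (2 * m)) :
    (∃ u : K, u ^ (2 ^ m + 1) = 1 ∧ u ≠ 1 ∧
      u ^ (2 ^ m) * u ^ (2 ^ (m - r)) + u * (u ^ (2 ^ m)) ^ (2 ^ (m - r)) = 0) ↔
    Odd m ∧ Odd r := by
  have : CharP K 2 := charP_of_card_eq_prime_pow hK
  constructor
  · rintro ⟨u, hu, hu1, heq⟩
    by_contra hodd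
    have hmr : Odd (m - r) := Nat.odd_sub_of_coprime hgcd (by omega) hodd
    have hcop : Nat.Coprime (2 ^ (m - r) - 1) (2 ^ m + 1) :=
      Nat.coprime_two_pow_sub_one_two_pow_add_one hmr
        ((Nat.coprime_self_sub_left (by omega)).mpr (Nat.coprime_comm.mp hgcd))
    exact hu1 ((pow_eq_one_iff_of_coprime hcop).mp
      ⟨pow_sub_one_eq_one_of_add_eq_zero (by positivity) hu heq, hu⟩)
  · rintro ⟨hm, hr⟩
    have : Fact (Nat.Prime 3) := ⟨Nat.prime_three⟩
    obtain ⟨ζ, hζ⟩ := exists_orderOf_eq_prime_of_dvd_card_sub_one (K := K) (p := 3) (by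
      rw [hK, pow_mul]
      simpa using Nat.sub_dvd_pow_sub_pow 4 1 m)
    have pow_eq_one {n : ℕ} (hn : 3 ∣ n) : ζ ^ n = 1 := orderOf_dvd_iff_pow_eq_one.mp (hζ ▸ hn)
    refine ⟨ζ, pow_eq_one (Nat.three_dvd_two_pow_add_one hm), fun h => by simp [h] at hζ, ?_⟩
    have hsplit : 2 ^ m = 2 ^ (m - r) * 2 ^ r := by rw [← pow_add, Nat.sub_add_cancel (by omega)]
    rw [← pow_add, ← pow_mul, ← pow_succ', ← pow_add, pow_eq_one, pow_eq_one,
      CharTwo.add_self_eq_zero]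
    · exact Nat.three_dvd_two_pow_add_one (hm.add_even (Nat.Odd.sub_odd hm hr))
    · rw [hsplit, ← mul_add_one]
      exact (Nat.three_dvd_two_pow_add_one hr).mul_left _

theorem solution_iff_m_odd_r_odd (m r : ℕ) (hr : 1 < r) (hrm : r + 1 < m)
    (hgcd : Nat.gcd m r = 1)
    (K : Type*) [Field K] [Fintype K] (hK : Fintype.card K = 2 ^ (2 * m)) :
    (∃ u : K, u ^ (2 ^ m + 1) = 1 ∧ u ≠ 1 ∧
      u ^ (2 ^ m) * u ^ (2 ^ (m - r)) + u * (u ^ (2 ^ m)) ^ (2 ^ (m - r)) = 0) ↔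
    Odd m ∧ Odd r :=
  solution_iff_m_odd_r_odd_general m r hrm hgcd K hK
end

section
/- Let q = 2^m, K = F_{q^2}, S the group of (q+1)-st roots of unity in K, and let w be a generator of S. If m is odd, r is even, 1 < r < m - 1, gcd(m, r) = 1, and u ∈ S satisfies u ≠ 1 and u^{1 + 2^{m-r}} ∈ F_q, then u = w^{(q+1)/3} or u = w^{-(q+1)/3}. -/
lemma two_pow_eq_one_zmod (o n : ℕ) (h : o ∣ 2 ^ n - 1) : (2 : ZMod o) ^ n = 1 := by
  have h0 : ((2 ^ n - 1 : ℕ) : ZMod o) = 0 := (ZMod.natCast_eq_zero_iff _ _).mpr h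
  have e : (2 : ℕ) ^ n = (2 ^ n - 1) + 1 := by
    have : 1 ≤ 2 ^ n := Nat.one_le_two_pow
    omega
  have : ((2 ^ n : ℕ) : ZMod o) = 1 := by
    rw [e, Nat.cast_add, Nat.cast_one, h0, zero_add]
  push_cast at this
  exact this

lemma mersenne_factor (m : ℕ) : 2 ^ (2 * m) - 1 = (2 ^ m - 1) * (2 ^ m + 1) := by
  obtain ⟨b, hb⟩ : ∃ b, 2 ^ m = b + 1 :=
    ⟨2 ^ m - 1, by have : 1 ≤ 2 ^ m := Nat.one_le_two_pow; omega⟩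
  rw [two_mul, pow_add, hb]
  have : (b + 1) * (b + 1) = b * (b + 1 + 1) + 1 := by ring
  rw [this, Nat.add_sub_cancel, Nat.add_sub_cancel]

theorem solutions_are_cube_roots (m r : ℕ) (hm : Odd m) (hrev : Even r)
    (hr : 1 < r) (hrm : r + 1 < m) (hgcd : Nat.gcd m r = 1)
    (K : Type*) [Field K] [Fintype K] (hK : Fintype.card K = 2 ^ (2 * m))
    (w : K) (hw : w ^ (2 ^ m + 1) = 1)
    (hgen : ∀ u : K, u ^ (2 ^ m + 1) = 1 → ∃ k : ℕ, u = w ^ k)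
    (u : K) (hu : u ^ (2 ^ m + 1) = 1) (hu1 : u ≠ 1)
    (hF : (u ^ (1 + 2 ^ (m - r))) ^ (2 ^ m) = u ^ (1 + 2 ^ (m - r))) :
    u = w ^ ((2 ^ m + 1) / 3) ∨ u = (w ^ ((2 ^ m + 1) / 3))⁻¹ := by
  classical
  set s : ℕ := m - r with hs
  have hrm' : r ≤ m := by omega
  have hs_pos : 0 < s := by omega
  have hs_odd : Odd s := Nat.Odd.sub_even hrm' hm hrev
  have hgcd_s : Nat.gcd m s = 1 := by
    rw [hs, Nat.gcd_self_sub_right hrm', hgcd]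
  -- Step 1: u ^ (2 * (1 + 2^s)) = 1
  set e : ℕ := 1 + 2 ^ s with he
  have h2e : u ^ (2 * e) = 1 := by
    have hA : u ^ (e * 2 ^ m) * u ^ e = 1 := by
      rw [← pow_add, show e * 2 ^ m + e = (2 ^ m + 1) * e by ring, pow_mul, hu, one_pow]
    have hB : u ^ (e * 2 ^ m) = u ^ e := by
      rw [pow_mul]; exact hF
    rw [hB, ← pow_add] at hA
    rw [show 2 * e = e + e by ring]
    exact hA
  -- Step 2: orderOf u divides 3
  set o : ℕ := orderOf u with ho
  have ho1 : o ∣ 2 ^ m + 1 := orderOf_dvd_of_pow_eq_one hu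
  have ho2 : o ∣ 2 * e := orderOf_dvd_of_pow_eq_one h2e
  have h2m : (2 : ℕ) ∣ 2 ^ m := dvd_pow_self 2 (by omega)
  have ho_not2 : ¬ (2 ∣ o) := by
    intro h
    have := h.trans ho1
    omega
  have hcop : Nat.Coprime 2 o := Nat.prime_two.coprime_iff_not_dvd.mpr ho_not2
  have ho_e : o ∣ e := (Nat.Coprime.dvd_of_dvd_mul_left hcop.symm) ho2
  have hdvd1 : o ∣ 2 ^ (2 * m) - 1 := by
    rw [mersenne_factor m]
    exact ho1.trans (Dvd.intro_left _ rfl)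
  have hdvd2 : o ∣ 2 ^ (2 * s) - 1 := by
    rw [mersenne_factor s]
    refine (ho_e.trans ?_)
    rw [he, add_comm]
    exact Dvd.intro_left _ rfl
  have hz1 : (2 : ZMod o) ^ (2 * m) = 1 := two_pow_eq_one_zmod o (2 * m) hdvd1
  have hz2 : (2 : ZMod o) ^ (2 * s) = 1 := two_pow_eq_one_zmod o (2 * s) hdvd2
  have hp1 : orderOf (2 : ZMod o) ∣ 2 * m := orderOf_dvd_of_pow_eq_one hz1
  have hp2 : orderOf (2 : ZMod o) ∣ 2 * s := orderOf_dvd_of_pow_eq_one hz2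
  have hpg : orderOf (2 : ZMod o) ∣ 2 := by
    have := Nat.dvd_gcd hp1 hp2
    rwa [Nat.gcd_mul_left, hgcd_s, mul_one] at this
  have hz3 : (2 : ZMod o) ^ 2 = 1 := orderOf_dvd_iff_pow_eq_one.mp hpg
  have ho3 : o ∣ 3 := by
    have h30 : ((3 : ℕ) : ZMod o) = 0 := by
      push_cast
      linear_combination hz3
    exact (ZMod.natCast_eq_zero_iff _ _).mp h30
  have hu3 : u ^ 3 = 1 := orderOf_dvd_iff_pow_eq_one.mp (ho.symm ▸ ho3)
  -- Step 3: orderOf w = 2^m + 1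
  obtain ⟨g, hg⟩ := IsCyclic.exists_generator (α := Kˣ)
  have hgord : orderOf g = 2 ^ (2 * m) - 1 := by
    have := orderOf_eq_card_of_forall_mem_zpowers hg
    rwa [Nat.card_units, Nat.card_eq_fintype_card, hK] at this
  have hm1pos : 0 < 2 ^ m - 1 := by
    have : (2:ℕ) ≤ 2 ^ m := by
      calc (2:ℕ) = 2 ^ 1 := rfl
      _ ≤ 2 ^ m := Nat.pow_le_pow_right (by omega) (by omega)
    omega
  have hword : orderOf (g ^ (2 ^ m - 1)) = 2 ^ m + 1 := by
    rw [orderOf_pow, hgord, mersenne_factor m,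
      Nat.gcd_eq_right (Dvd.intro _ rfl), Nat.mul_div_cancel_left _ hm1pos]
  set w' : K := ((g ^ (2 ^ m - 1) : Kˣ) : K) with hw'
  have hw'ord : orderOf w' = 2 ^ m + 1 := by rw [hw', orderOf_units, hword]
  have hw'pow : w' ^ (2 ^ m + 1) = 1 := by rw [← hw'ord]; exact pow_orderOf_eq_one w'
  obtain ⟨k₀, hk₀⟩ := hgen w' hw'pow
  have hle : 2 ^ m + 1 ∣ orderOf w := by
    rw [← hw'ord]
    apply orderOf_dvd_of_pow_eq_one
    rw [hk₀, ← pow_mul, mul_comm, pow_mul, pow_orderOf_eq_one, one_pow]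
  have hword_eq : orderOf w = 2 ^ m + 1 :=
    Nat.dvd_antisymm (orderOf_dvd_of_pow_eq_one hw) hle
  -- 3 divides 2^m + 1
  have h3 : 3 ∣ 2 ^ m + 1 := by
    have hc : ((2 ^ m + 1 : ℕ) : ZMod 3) = 0 := by
      push_cast
      rw [show ((2 : ZMod 3)) = -1 by decide, hm.neg_one_pow]
      ring
    exact (ZMod.natCast_eq_zero_iff _ _).mp hc
  set t : ℕ := (2 ^ m + 1) / 3 with ht
  have h3t : 3 * t = 2 ^ m + 1 := Nat.mul_div_cancel' h3
  set v : K := w ^ t with hv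
  have hv3 : v ^ 3 = 1 := by
    rw [hv, ← pow_mul, mul_comm, h3t, hw]
  have hv1 : v ≠ 1 := by
    intro h
    have hdvd : orderOf w ∣ t := orderOf_dvd_of_pow_eq_one h
    rw [hword_eq] at hdvd
    have htpos : 0 < t := by
      rcases Nat.eq_zero_or_pos t with h0 | h0
      · rw [h0] at h3t; omega
      · exact h0
    have := Nat.le_of_dvd htpos hdvd
    omega
  -- Step 4: conclude
  have hu0 : u - 1 ≠ 0 := sub_ne_zero.mpr hu1
  have hv0 : v - 1 ≠ 0 := sub_ne_zero.mpr hv1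
  have huq : u ^ 2 + u + 1 = 0 := by
    have hfac : (u - 1) * (u ^ 2 + u + 1) = 0 := by linear_combination hu3
    exact (mul_eq_zero.mp hfac).resolve_left hu0
  have hvq : v ^ 2 + v + 1 = 0 := by
    have hfac : (v - 1) * (v ^ 2 + v + 1) = 0 := by linear_combination hv3
    exact (mul_eq_zero.mp hfac).resolve_left hv0
  have hfac : (u - v) * (u - v ^ 2) = 0 := by
    linear_combination huq + hv3 - u * hvq
  rcases mul_eq_zero.mp hfac with h | h
  · left
    have := sub_eq_zero.mp h
    rw [this, hv]
  · right
    have huv2 : u = v ^ 2 := sub_eq_zero.mp h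
    have hvinv : v ^ 2 = v⁻¹ := eq_inv_of_mul_eq_one_left (by linear_combination hv3)
    rw [huv2, hvinv, hv]
end

section
/- Let q = 2^m, K = F_{q^2}, with conjugation x̄ = x^q, and let r satisfy 1 ≤ r < m. For u ∈ S = {u : u·ū = 1} with u ≠ 1 and d_i defined by 2^r·d_i ≡ (2^m - 1)·i + 2^r (mod 2^{2m} - 1), the following identity holds: 1 + Σ_{i=1}^{2^{r-1}-1} u^{d_i} + Σ_{i=1}^{2^{r-1}-1} ū^{d_i} = (u·u^{2^{m-r}} + ū·ū^{2^{m-r}}) / (u^{2^{m-r}} + ū^{2^{m-r}}). -/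
theorem niho_sum_identity (m r : ℕ) (hr : 1 ≤ r) (hrm : r < m)
    (K : Type*) [Field K] [Fintype K] (hK : Fintype.card K = 2 ^ (2 * m))
    (d : ℕ → ℕ)
    (hd : ∀ i : ℕ, 2 ^ r * d i ≡ (2 ^ m - 1) * i + 2 ^ r [MOD 2 ^ (2 * m) - 1])
    (u : K) (hu : u ^ (2 ^ m + 1) = 1) (hu1 : u ≠ 1) :
    1 + (∑ i ∈ Finset.Icc 1 (2 ^ (r - 1) - 1), u ^ d i)
      + (∑ i ∈ Finset.Icc 1 (2 ^ (r - 1) - 1), (u ^ (2 ^ m)) ^ d i)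
    = (u * u ^ (2 ^ (m - r)) + u ^ (2 ^ m) * (u ^ (2 ^ m)) ^ (2 ^ (m - r)))
      / (u ^ (2 ^ (m - r)) + (u ^ (2 ^ m)) ^ (2 ^ (m - r))) := by
  classical
  -- characteristic 2
  haveI hchar : CharP K 2 := by
    obtain ⟨n, hp, hcard⟩ := FiniteField.card K (ringChar K)
    have hdvd : ringChar K ∣ 2 ^ (2 * m) := by
      rw [← hK, hcard]
      exact dvd_pow_self _ (by exact_mod_cast n.pos.ne')
    have h2 : ringChar K = 2 :=
      (Nat.prime_dvd_prime_iff_eq hp Nat.prime_two).mp (hp.dvd_of_dvd_pow hdvd)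
    exact h2 ▸ ringChar.charP K
  have h2K : (2 : K) = 0 := by
    have := CharP.cast_eq_zero K 2
    exact_mod_cast this
  have hu0 : u ≠ 0 := by
    intro h
    rw [h, zero_pow (Nat.succ_ne_zero _)] at hu
    exact zero_ne_one hu
  set v := u ^ (2 ^ m) with hv
  have huv : u * v = 1 := by
    rw [hv, mul_comm, ← pow_succ]
    exact hu
  -- u ^ (2^(2m)-1) = 1
  have hfac : (2 ^ m + 1) * (2 ^ m - 1) = 2 ^ (2 * m) - 1 := by
    have h1 : (1 : ℕ) ≤ 2 ^ m := Nat.one_le_two_pow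
    have h2 : (1 : ℕ) ≤ 2 ^ (2 * m) := Nat.one_le_two_pow
    zify [h1, h2]
    have h3 : (2 : ℤ) ^ (2 * m) = 2 ^ m * 2 ^ m := by rw [two_mul, pow_add]
    rw [h3]; ring
  have hQ2 : u ^ (2 ^ (2 * m) - 1) = 1 := by
    rw [← hfac, pow_mul, hu, one_pow]
  -- u^(2^m - 1) = v^2
  have hw : u ^ (2 ^ m - 1) = v ^ 2 := by
    have h1 : u ^ (2 ^ m - 1) * u ^ 2 = 1 := by
      rw [← pow_add]
      have h3 : 2 ^ m - 1 + 2 = 2 ^ m + 1 := by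
        have := Nat.one_le_two_pow (n := m); omega
      rw [h3]; exact hu
    have h2 : v ^ 2 * u ^ 2 = 1 := by
      rw [← mul_pow, mul_comm v u, huv, one_pow]
    exact mul_right_cancel₀ (pow_ne_zero 2 hu0) (h1.trans h2.symm)
  -- key exponent identities
  have key : ∀ i : ℕ, (u ^ d i) ^ 2 ^ r = u ^ 2 ^ r * (v ^ 2) ^ i := by
    intro i
    rw [← pow_mul, mul_comm (d i) (2 ^ r)]
    rw [pow_eq_pow_mod _ hQ2,
      show (2 ^ r * d i) % (2 ^ (2 * m) - 1)
          = ((2 ^ m - 1) * i + 2 ^ r) % (2 ^ (2 * m) - 1) from hd i,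
      ← pow_eq_pow_mod _ hQ2]
    rw [pow_add, pow_mul, hw, mul_comm]
  have key2 : ∀ i : ℕ, (v ^ d i) ^ 2 ^ r = v ^ 2 ^ r * (u ^ 2) ^ i := by
    intro i
    have h1 : (v ^ d i) ^ 2 ^ r * (u ^ d i) ^ 2 ^ r = 1 := by
      rw [← mul_pow, ← mul_pow, mul_comm v u, huv, one_pow, one_pow]
    rw [key i] at h1
    have h2 : v ^ 2 ^ r * (u ^ 2) ^ i * (u ^ 2 ^ r * (v ^ 2) ^ i) = 1 := by
      calc v ^ 2 ^ r * (u ^ 2) ^ i * (u ^ 2 ^ r * (v ^ 2) ^ i)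
          = (u * v) ^ 2 ^ r * ((u * v) ^ 2) ^ i := by ring
        _ = 1 := by rw [huv]; simp
    have hc : u ^ 2 ^ r * (v ^ 2) ^ i ≠ 0 := by
      intro h
      rw [h, mul_zero] at h1
      exact zero_ne_one h1
    exact mul_right_cancel₀ hc (h1.trans h2.symm)
  -- nondegeneracy
  have hu2ne : u ^ 2 ≠ 1 := by
    intro h
    apply hu1
    have hsq : (u - 1) ^ 2 = 0 := by linear_combination h + (1 - u) * h2K
    have := pow_eq_zero_iff (two_ne_zero) |>.mp hsq
    exact sub_eq_zero.mp this
  have hvu : u + v ≠ 0 := by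
    intro h
    exact hu2ne (by linear_combination u * h - huv - h2K)
  have hv2ne : v ^ 2 ≠ 1 := by
    intro h
    apply hu2ne
    calc u ^ 2 = u ^ 2 * v ^ 2 := by rw [h, mul_one]
      _ = (u * v) ^ 2 := (mul_pow u v 2).symm
      _ = 1 := by rw [huv, one_pow]
  -- powers of t and t'
  have e1 : (2 : ℕ) ^ (m - r) * 2 ^ r = 2 ^ m := by
    rw [← pow_add, Nat.sub_add_cancel hrm.le]
  have ht : (u ^ 2 ^ (m - r)) ^ 2 ^ r = v := by
    rw [← pow_mul, e1]
  have e3 : u ^ 2 ^ (2 * m) = u := by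
    conv_lhs =>
      rw [show (2 : ℕ) ^ (2 * m) = 2 ^ (2 * m) - 1 + 1 from by
        have := Nat.one_le_two_pow (n := 2 * m); omega]
    rw [pow_add, hQ2, one_mul, pow_one]
  have ht' : (v ^ 2 ^ (m - r)) ^ 2 ^ r = u := by
    rw [← pow_mul, e1, hv, ← pow_mul, ← pow_add, ← two_mul, e3]
  have hden : u ^ 2 ^ (m - r) + v ^ 2 ^ (m - r) ≠ 0 := by
    intro h
    have h0 : (u ^ 2 ^ (m - r) + v ^ 2 ^ (m - r)) ^ 2 ^ r = 0 := by
      rw [h, zero_pow (by positivity)]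
    rw [add_pow_char_pow, ht, ht'] at h0
    exact hvu (by rw [add_comm]; exact h0)
  rw [eq_div_iff hden]
  -- injectivity of Frobenius iterate
  have inj : ∀ a b : K, a ^ 2 ^ r = b ^ 2 ^ r → a = b := by
    intro a b hab
    have h0 : (a - b) ^ (2 : ℕ) ^ r = 0 := by
      rw [sub_pow_char_pow, hab, sub_self]
    exact sub_eq_zero.mp (pow_eq_zero_iff (by positivity) |>.mp h0)
  apply inj
  -- geometric sum identity
  have er : 2 * 2 ^ (r - 1) = 2 ^ r :=
    (mul_comm 2 (2 ^ (r - 1))).trans ((pow_succ 2 (r - 1)).symm.trans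
      (by rw [Nat.sub_add_cancel hr]))
  have epow : ∀ y : K, (y ^ 2) ^ 2 ^ (r - 1) = y ^ 2 ^ r := by
    intro y; rw [← pow_mul, er]
  have geom : ∀ y : K,
      (∑ i ∈ Finset.Icc 1 (2 ^ (r - 1) - 1), y ^ i) * (y - 1) = y ^ 2 ^ (r - 1) - y := by
    intro y
    set N := 2 ^ (r - 1) - 1 with hN
    have hN1 : N + 1 = 2 ^ (r - 1) := by
      have := Nat.one_le_two_pow (n := r - 1); omega
    have h2 : ∑ i ∈ Finset.range (N + 1), y ^ i
        = y ^ 0 + ∑ i ∈ Finset.Ico 1 (N + 1), y ^ i := by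
      rw [Finset.range_eq_Ico, Finset.sum_eq_sum_Ico_succ_bot (Nat.succ_pos N)]
    have h3 := geom_sum_mul y (N + 1)
    rw [h2] at h3
    rw [show Finset.Icc 1 N = Finset.Ico 1 (N + 1) from (Finset.Ico_add_one_right_eq_Icc 1 N).symm, ← hN1]
    linear_combination h3
  have hGu : (∑ i ∈ Finset.Icc 1 (2 ^ (r - 1) - 1), (u ^ 2) ^ i) * (u ^ 2 - 1)
      = u ^ 2 ^ r - u ^ 2 := by
    rw [← epow u]; exact geom (u ^ 2)
  have hGv : (∑ i ∈ Finset.Icc 1 (2 ^ (r - 1) - 1), (v ^ 2) ^ i) * (v ^ 2 - 1)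
      = v ^ 2 ^ r - v ^ 2 := by
    rw [← epow v]; exact geom (v ^ 2)
  have hS : u ^ 2 ^ r * v ^ 2 ^ r = 1 := by rw [← mul_pow, huv, one_pow]
  -- expand both sides
  rw [mul_pow, add_pow_char_pow, add_pow_char_pow, add_pow_char_pow, one_pow, ht, ht',
    add_pow_char_pow, mul_pow, mul_pow, ht, ht',
    sum_pow_char_pow, sum_pow_char_pow,
    Finset.sum_congr rfl (fun i _ => key i), Finset.sum_congr rfl (fun i _ => key2 i),
    ← Finset.mul_sum, ← Finset.mul_sum]
  apply mul_right_cancel₀ (mul_ne_zero (sub_ne_zero.mpr hu2ne) (sub_ne_zero.mpr hv2ne))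
  linear_combination
    (u ^ 2 ^ r * (u + v) * (u ^ 2 - 1)) * hGv
    + (v ^ 2 ^ r * (u + v) * (v ^ 2 - 1)) * hGu
    + (-v * u ^ 2 ^ r + v * u ^ 2 ^ r * v ^ 2 ^ r - u * v ^ 2 ^ r
        + u * u ^ 2 ^ r * v ^ 2 ^ r + u * v ^ 2 - u * v ^ 2 * v ^ 2 ^ r
        - 2 * u * v ^ 2 * u ^ 2 ^ r + u ^ 2 * v - 2 * u ^ 2 * v * v ^ 2 ^ r
        - u ^ 2 * v * u ^ 2 ^ r) * huv
    + (u ^ 3 + v ^ 3 - u - v) * hS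
    + (v ^ 3 * u ^ 2 ^ r - v * u ^ 2 ^ r + u ^ 3 * v ^ 2 ^ r - u * v ^ 2 ^ r) * h2K
end

section
/- Let q = 2^m with m ≥ 3 odd, and F = F_q. Define h: F → F by h(t) = t + (t+1)·(t/(t+1))^6 for t ≠ 1 and h(1) = 1. Then for t ≠ 1, h(t) = 1 + D_5(1/(t+1)) where D_5(x) = x + x^3 + x^5, and consequently h is a bijection of F with inverse h^{-1}(t) = (D_{1/5}(t+1))^{-1} + 1 for t ≠ 1, where D_{1/5} is the inverse of the Dickson permutation D_5. -/
/-! In characteristic 2, with `s = t + 1`, one has `(s + 1)^6 = s^6 + s^4 + s^2 + 1`, so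
`h t = 1 + 1/s + 1/s^3 + 1/s^5 = 1 + D₅(1/s)`; with the convention `0⁻¹ = 0` this identity also
holds at `t = 1`. Hence `h` is the composite of the bijections `t ↦ t + 1`, inversion, `D₅` and
`x ↦ 1 + x`, and inverting each of them in turn gives the formula for `h⁻¹`. -/

theorem add_mul_div_pow_six_eq_one_add_inv {F : Type*} [Field F] [CharP F 2] (t : F) :
    t + (t + 1) * (t / (t + 1)) ^ 6 = 1 + ((t + 1)⁻¹ + (t + 1)⁻¹ ^ 3 + (t + 1)⁻¹ ^ 5) := by
  obtain ⟨s, rfl⟩ : ∃ s, t = s + 1 := ⟨t + 1, (CharTwo.add_cancel_right t 1).symm⟩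
  rw [CharTwo.add_cancel_right]
  rcases eq_or_ne s 0 with rfl | hs
  · simp
  · field_simp
    linear_combination s * (3 + 7 * s + 10 * s ^ 2 + 7 * s ^ 3 + 3 * s ^ 4 + s ^ 5) *
      CharTwo.two_eq_zero (R := F)

theorem bijective_one_add_comp_inv_add_one {K : Type*} [DivisionRing K] {D : K → K}
    (hD : Function.Bijective D) : Function.Bijective fun t : K => 1 + D (t + 1)⁻¹ :=
  (AddGroup.addLeft_bijective 1).comp
    (hD.comp (inv_involutive.bijective.comp (AddGroup.addRight_bijective 1)))

theorem payne_like_o_polynomial_inverse_general (m : ℕ)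
    (F : Type*) [Field F] [Fintype F] (hF : Fintype.card F = 2 ^ m)
    (h D5 D5inv : F → F)
    (hdef : ∀ t : F, h t = t + (t + 1) * (t / (t + 1)) ^ 6)
    (hD5 : ∀ x : F, D5 x = x + x ^ 3 + x ^ 5)
    (hli : Function.LeftInverse D5inv D5)
    (hri : Function.RightInverse D5inv D5) :
    (∀ t : F, t ≠ 1 → h t = 1 + D5 ((t + 1)⁻¹)) ∧
    Function.Bijective h ∧
    (∀ t : F, t ≠ 1 → h ((D5inv (t + 1))⁻¹ + 1) = t) := by
  have : CharP F 2 := charP_of_card_eq_prime_pow hF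
  obtain rfl : h = fun t => 1 + D5 (t + 1)⁻¹ :=
    funext fun t => by rw [hdef, hD5, add_mul_div_pow_six_eq_one_add_inv]
  refine ⟨fun t _ => rfl, bijective_one_add_comp_inv_add_one ⟨hli.injective, hri.surjective⟩,
    fun t _ => ?_⟩
  dsimp only
  rw [CharTwo.add_cancel_right, inv_inv, hri (t + 1), add_comm t, CharTwo.add_cancel_left]

theorem payne_like_o_polynomial_inverse (m : ℕ) (hm : 3 ≤ m) (hmo : Odd m)
    (F : Type*) [Field F] [Fintype F] (hF : Fintype.card F = 2 ^ m)
    (h D5 D5inv : F → F)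
    (hdef : ∀ t : F, h t = t + (t + 1) * (t / (t + 1)) ^ 6)
    (hD5 : ∀ x : F, D5 x = x + x ^ 3 + x ^ 5)
    (hli : Function.LeftInverse D5inv D5)
    (hri : Function.RightInverse D5inv D5) :
    (∀ t : F, t ≠ 1 → h t = 1 + D5 ((t + 1)⁻¹)) ∧
    Function.Bijective h ∧
    (∀ t : F, t ≠ 1 → h ((D5inv (t + 1))⁻¹ + 1) = t) :=
  payne_like_o_polynomial_inverse_general m F hF h D5 D5inv hdef hD5 hli hri
end

section
/- Let q = 2^m, K = F_{q^2}, conjugation x̄ = x^q, and let s be coprime to q - 1 with inverse s^{-1} mod q - 1. For every nonzero x ∈ K, writing x = λu with λ ∈ F_q nonzero and u ∈ S (so λ = (x·x̄)^{1/2}, u = (x/x̄)^{1/2}), and assuming ⟨1,u⟩ ≠ 0, the identity λ·⟨i,u⟩^{s^{-1}}·⟨1,u⟩^{q - s^{-1}} = (ī·x + i·x̄)^{s^{-1}}·(x + x̄)^{q - s^{-1}} holds, where i ∈ K satisfies i + ī = 1 and ⟨a,b⟩ = a·b̄ + ā·b. -/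
theorem niho_bent_univariate_identity (m s sinv : ℕ) (hm : 1 ≤ m)
    (hs : Nat.Coprime s (2 ^ m - 1)) (hsinv : s * sinv ≡ 1 [MOD 2 ^ m - 1])
    (hlt : sinv < 2 ^ m)
    (K : Type*) [Field K] [Fintype K] (hK : Fintype.card K = 2 ^ (2 * m))
    (i : K) (hi : i + i ^ (2 ^ m) = 1)
    (x l u : K) (hx : x ≠ 0)
    (hl : l ^ 2 = x * x ^ (2 ^ m)) (hu : u ^ 2 = x / x ^ (2 ^ m)) (hxu : x = l * u)
    (hne : u ^ (2 ^ m) + u ≠ 0) :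
    l * (i * u ^ (2 ^ m) + i ^ (2 ^ m) * u) ^ sinv
      * (u ^ (2 ^ m) + u) ^ (2 ^ m - sinv)
    = (i ^ (2 ^ m) * x + i * x ^ (2 ^ m)) ^ sinv
      * (x + x ^ (2 ^ m)) ^ (2 ^ m - sinv) := by
  -- characteristic 2
  have h2 : (2 : K) = 0 := by
    have hc : (Fintype.card K : K) = 0 := FiniteField.cast_card_eq_zero K
    rw [hK] at hc
    push_cast at hc
    exact pow_eq_zero_iff (show 2*m ≠ 0 by omega) |>.mp hc
  -- squaring is injective
  have hsq : ∀ a b : K, a ^ 2 = b ^ 2 → a = b := by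
    intro a b h
    have hz : (a - b) ^ 2 = 0 := by linear_combination h + (b ^ 2 - a * b) * h2
    have := pow_eq_zero_iff (n := 2) (by norm_num) |>.mp hz
    exact sub_eq_zero.mp this
  -- x ^ (q^2) = x
  have hxq2 : x ^ (2 ^ m * 2 ^ m) = x := by
    have := FiniteField.pow_card x
    rwa [hK, two_mul, pow_add] at this
  -- l is fixed by Frobenius^m
  have hlq : l ^ 2 ^ m = l := by
    apply hsq
    rw [← pow_mul, mul_comm (2^m) 2, pow_mul, hl, mul_pow, ← pow_mul, hxq2, mul_comm]
  have hxbar : x ^ 2 ^ m = l * u ^ 2 ^ m := by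
    rw [hxu, mul_pow, hlq]
  rw [hxbar, hxu]
  have e1 : i ^ 2 ^ m * (l * u) + i * (l * u ^ 2 ^ m)
      = l * (i * u ^ 2 ^ m + i ^ 2 ^ m * u) := by ring
  have e2 : l * u + l * u ^ 2 ^ m = l * (u ^ 2 ^ m + u) := by ring
  rw [e1, e2, mul_pow, mul_pow]
  have hl2 : l ^ sinv * l ^ (2 ^ m - sinv) = l := by
    rw [← pow_add, Nat.add_sub_cancel' hlt.le, hlq]
  linear_combination -((i * u ^ 2 ^ m + i ^ 2 ^ m * u) ^ sinv
    * (u ^ 2 ^ m + u) ^ (2 ^ m - sinv)) * hl2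
end

section
/- Let q = 2^m, K = F_{q^2}, S = {u ∈ K : u^{q+1} = 1}, and let O ⊆ K be a set of the form O = {v/g(v) : v ∈ S} for some function g: S → F_q with g(v) ≠ 0 for all v. Then for every fixed u ∈ S: Σ_{i=0}^{q} (u·v^{(q-1)/2})^i equals 0 if v ∈ O corresponds to z ≠ u (i.e. v = z/g(z), z ≠ u), and equals 1 if z = u. Consequently g(u) = Σ_{i=0}^{q} Σ_{v ∈ O} v^{(q-1)i/2 - 1}·u^{i+1}. -/
theorem g_function_interpolation (m : ℕ) (hm : 1 ≤ m)
    (K : Type*) [Field K] [Fintype K] [DecidableEq K]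
    (hK : Fintype.card K = 2 ^ (2 * m)) (g : K → K)
    (hg : ∀ v : K, v ^ (2 ^ m + 1) = 1 → g v ≠ 0 ∧ (g v) ^ (2 ^ m) = g v)
    (hinj : ∀ z₁ z₂ : K, z₁ ^ (2 ^ m + 1) = 1 → z₂ ^ (2 ^ m + 1) = 1 →
      z₁ / g z₁ = z₂ / g z₂ → z₁ = z₂) :
    (∀ u z : K, u ^ (2 ^ m + 1) = 1 → z ^ (2 ^ m + 1) = 1 →
      (∑ i ∈ Finset.range (2 ^ m + 1),
        (u * ((z / g z) ^ (2 ^ m - 1)) ^ (2 ^ (2 * m - 1))) ^ i)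
      = if z = u then 1 else 0) ∧
    (∀ u : K, u ^ (2 ^ m + 1) = 1 →
      g u = ∑ i ∈ Finset.range (2 ^ m + 1),
        ∑ z ∈ Finset.univ.filter (fun z : K => z ^ (2 ^ m + 1) = 1),
          (((z / g z) ^ (2 ^ m - 1)) ^ (2 ^ (2 * m - 1))) ^ i
            * (z / g z)⁻¹ * u ^ (i + 1)) := by
  -- characteristic 2
  have h2 : (2 : K) = 0 := by
    have hc : ((Fintype.card K : ℕ) : K) = 0 := FiniteField.cast_card_eq_zero K
    rw [hK] at hc
    push_cast at hc
    exact (pow_eq_zero_iff (by omega : 2 * m ≠ 0)).mp hc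
  -- Frobenius
  have frob : ∀ x : K, x ^ (2 ^ (2 * m)) = x := by
    intro x; rw [← hK]; exact FiniteField.pow_card x
  -- squaring is injective
  have sqinj : ∀ x y : K, x ^ 2 = y ^ 2 → x = y := by
    intro x y h
    have h3 : (x - y) ^ 2 = 0 := by linear_combination h + (y ^ 2 - x * y) * h2
    have := (pow_eq_zero_iff (two_ne_zero)).mp h3
    exact sub_eq_zero.mp this
  -- the key simplification
  have hA : ∀ z : K, z ^ (2 ^ m + 1) = 1 →
      ((z / g z) ^ (2 ^ m - 1)) ^ (2 ^ (2 * m - 1)) = z⁻¹ := by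
    intro z hz
    have hz0 : z ≠ 0 := by
      intro h; rw [h, zero_pow (by positivity)] at hz; exact zero_ne_one hz
    obtain ⟨hg0, hgq⟩ := hg z hz
    have hgq1 : (g z) ^ (2 ^ m - 1) = 1 := by
      have h1 : (g z) ^ (2 ^ m - 1) * g z = g z := by
        rw [← pow_succ, show 2 ^ m - 1 + 1 = 2 ^ m from by
          have := Nat.one_le_two_pow (n := m); omega]
        exact hgq
      have := mul_right_cancel₀ hg0 (h1.trans (one_mul (g z)).symm)
      exact this
    have hzq : z ^ (2 ^ m - 1) = (z⁻¹) ^ 2 := by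
      have h1 : z ^ (2 ^ m - 1) * z ^ 2 = 1 := by
        rw [← pow_add, show 2 ^ m - 1 + 2 = 2 ^ m + 1 from by
          have := Nat.one_le_two_pow (n := m); omega]
        exact hz
      field_simp
      linear_combination h1
    have key : (z / g z) ^ (2 ^ m - 1) = (z⁻¹) ^ 2 := by
      rw [div_pow, hzq, hgq1, div_one]
    apply sqinj
    rw [← pow_mul, show 2 ^ (2 * m - 1) * 2 = 2 ^ (2 * m) from by
      rw [← pow_succ]; congr 1; omega]
    rw [frob, key]
  -- geometric series
  have hgeom : ∀ t : K, t ^ (2 ^ m + 1) = 1 →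
      ∑ i ∈ Finset.range (2 ^ m + 1), t ^ i = if t = 1 then 1 else 0 := by
    intro t ht
    by_cases h1 : t = 1
    · rw [if_pos h1]
      simp only [h1, one_pow, Finset.sum_const, Finset.card_range, nsmul_eq_mul, mul_one]
      push_cast
      rw [h2, zero_pow (by omega : m ≠ 0)]
      ring
    · rw [if_neg h1, geom_sum_eq h1, ht, sub_self, zero_div]
  -- part 1 as a reusable statement
  have part1 : ∀ u z : K, u ^ (2 ^ m + 1) = 1 → z ^ (2 ^ m + 1) = 1 →
      (∑ i ∈ Finset.range (2 ^ m + 1),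
        (u * ((z / g z) ^ (2 ^ m - 1)) ^ (2 ^ (2 * m - 1))) ^ i)
      = if z = u then 1 else 0 := by
    intro u z hu hz
    have hz0 : z ≠ 0 := by
      intro h; rw [h, zero_pow (by positivity)] at hz; exact zero_ne_one hz
    rw [hA z hz]
    have ht : (u * z⁻¹) ^ (2 ^ m + 1) = 1 := by
      rw [mul_pow, hu, inv_pow, hz, inv_one, one_mul]
    rw [hgeom _ ht]
    have hiff : (u * z⁻¹ = 1) ↔ (z = u) := by
      rw [mul_inv_eq_one₀ hz0]; exact eq_comm
    simp [hiff]
  refine ⟨part1, ?_⟩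
  intro u hu
  have hu0 : u ≠ 0 := by
    intro h; rw [h, zero_pow (by positivity)] at hu; exact zero_ne_one hu
  rw [Finset.sum_comm]
  have hrw : ∀ z ∈ Finset.univ.filter (fun z : K => z ^ (2 ^ m + 1) = 1),
      (∑ i ∈ Finset.range (2 ^ m + 1),
        (((z / g z) ^ (2 ^ m - 1)) ^ (2 ^ (2 * m - 1))) ^ i
          * (z / g z)⁻¹ * u ^ (i + 1))
      = if z = u then g u else 0 := by
    intro z hzmem
    rw [Finset.mem_filter] at hzmem
    have hz := hzmem.2
    have hz0 : z ≠ 0 := by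
      intro h; rw [h, zero_pow (by positivity)] at hz; exact zero_ne_one hz
    obtain ⟨hg0, _⟩ := hg z hz
    have hterm : ∀ i : ℕ,
        (((z / g z) ^ (2 ^ m - 1)) ^ (2 ^ (2 * m - 1))) ^ i
          * (z / g z)⁻¹ * u ^ (i + 1)
        = (g z / z * u) * (u * z⁻¹) ^ i := by
      intro i
      rw [hA z hz]
      field_simp
      ring
    rw [Finset.sum_congr rfl (fun i _ => hterm i), ← Finset.mul_sum]
    have ht : (u * z⁻¹) ^ (2 ^ m + 1) = 1 := by
      rw [mul_pow, hu, inv_pow, hz, inv_one, one_mul]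
    rw [hgeom _ ht]
    by_cases hzu : z = u
    · subst hzu
      rw [if_pos (mul_inv_cancel₀ hz0), if_pos rfl, mul_one]
      field_simp
    · rw [if_neg (fun h => hzu (((mul_inv_eq_one₀ hz0).mp h).symm)), if_neg hzu,
        mul_zero]
  rw [Finset.sum_congr rfl hrw, Finset.sum_ite_eq' _ u (fun _ => g u)]
  simp [hu]
end
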